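/- arXiv:2403.05251 — 6 statements merged into one kernel-verified Lean document; each statement's English description precedes it below -/
import Mathlib

section
/- Let β, γ > 0 with β ≠ γ, and define g(x) = (γ/β)·((e^{βx} − 1)/(e^{γx} − 1)) − 1 for x > 0. If β > γ then g is monotone increasing on (0, ∞), and if β < γ then g is monotone decreasing on (0, ∞). -/
/-!
Substituting `t = e^{γx}` (which increases from `1` to `∞`) turns `e^{βx}` into `t ^ (β/γ)`, so
`g x + 1` is a positive multiple of the slope of the secant of `t ↦ t ^ (β/γ)` between `1` and `t`.
That slope increases in `t` when the power function is strictly convex (`β > γ`) and decreases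
when it is strictly concave (`β < γ`).
-/

open Real Set

section Secant

variable {𝕜 : Type*} [Field 𝕜] [LinearOrder 𝕜] [IsStrictOrderedRing 𝕜] {s : Set 𝕜} {f : 𝕜 → 𝕜}
  {a : 𝕜}

theorem StrictConvexOn.strictMonoOn_secant (hf : StrictConvexOn 𝕜 s f) (ha : a ∈ s) :
    StrictMonoOn (fun t => (f t - f a) / (t - a)) (s \ {a}) :=
  fun _ hx _ hy hxy => hf.secant_strict_mono ha hx.1 hy.1 hx.2 hy.2 hxy

theorem StrictConcaveOn.strictAntiOn_secant (hf : StrictConcaveOn 𝕜 s f) (ha : a ∈ s) :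
    StrictAntiOn (fun t => (f t - f a) / (t - a)) (s \ {a}) :=
  fun _ hx _ hy hxy => hf.secant_strict_mono ha hx.1 hy.1 hx.2 hy.2 hxy

end Secant

theorem stmt_0_general (β γ : ℝ) (hβ : 0 < β) (hγ : 0 < γ)
    (g : ℝ → ℝ)
    (hg : ∀ x, g x = (γ / β) * ((Real.exp (β * x) - 1) / (Real.exp (γ * x) - 1)) - 1) :
    (β > γ → StrictMonoOn g (Set.Ioi (0 : ℝ))) ∧
      (β < γ → StrictAntiOn g (Set.Ioi (0 : ℝ))) := by
  have hg_comp : g = (fun s => γ / β * s - 1) ∘ (fun t => (t ^ (β / γ) - 1 ^ (β / γ)) / (t - 1)) ∘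
      fun x => exp (γ * x) := by
    funext x
    have hpow : exp (γ * x) ^ (β / γ) = exp (β * x) := by
      rw [← exp_mul]; congr 1; field_simp
    simp only [Function.comp_apply, hpow, one_rpow, hg]
  have haffine : StrictMono fun s => γ / β * s - 1 :=
    fun _ _ h => sub_lt_sub_right (mul_lt_mul_of_pos_left h (div_pos hγ hβ)) 1
  have hsubst : StrictMonoOn (fun x => exp (γ * x)) (Ioi 0) :=
    (exp_strictMono.comp (strictMono_mul_left_of_pos hγ)).strictMonoOn _
  have hmaps : MapsTo (fun x => exp (γ * x)) (Ioi 0) (Ici 0 \ {1}) :=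
    fun x hx => ⟨(exp_pos _).le, (one_lt_exp_iff.2 (mul_pos hγ hx)).ne'⟩
  rw [hg_comp]
  refine ⟨fun hβ_gt => ?_, fun hβ_lt => ?_⟩
  · have hconvex := strictConvexOn_rpow ((one_lt_div hγ).2 hβ_gt)
    exact haffine.comp_strictMonoOn ((hconvex.strictMonoOn_secant (by simp)).comp hsubst hmaps)
  · have hconcave := strictConcaveOn_rpow (div_pos hβ hγ) ((div_lt_one hγ).2 hβ_lt)
    exact haffine.comp_strictAntiOn
      ((hconcave.strictAntiOn_secant (by simp)).comp_strictMonoOn hsubst hmaps)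

/-- For `β, γ > 0` with `β ≠ γ`, the function
`g x = (γ/β) * ((e^{βx} - 1)/(e^{γx} - 1)) - 1` is (strictly) increasing on `(0,∞)`
when `β > γ`, and (strictly) decreasing on `(0,∞)` when `β < γ`. -/
theorem stmt_0 (β γ : ℝ) (hβ : 0 < β) (hγ : 0 < γ) (hne : β ≠ γ)
    (g : ℝ → ℝ)
    (hg : ∀ x, g x = (γ / β) * ((Real.exp (β * x) - 1) / (Real.exp (γ * x) - 1)) - 1) :
    (β > γ → StrictMonoOn g (Set.Ioi (0 : ℝ))) ∧
      (β < γ → StrictAntiOn g (Set.Ioi (0 : ℝ))) :=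
  stmt_0_general β γ hβ hγ g hg
end

section
/- Let 0 < β < λ. Then the relative error in the reversed hazard rate for the Marshall–Olkin multivariate exponential series system, E(x) = (λ/β)·((e^{βx} − 1)/(e^{λx} − 1)) − 1, is negative for every x > 0 and is monotone decreasing in x on (0, ∞). -/
/-! With `r = β / λ ∈ (0, 1)` and `p = e^{λx} > 1` we have `e^{βx} = p ^ r`, so
`E x = (1 / r) * (p ^ r - 1) / (p - 1) - 1`. The quotient is the slope of the secant of the
strictly concave map `p ↦ p ^ r` through `1`: it is strictly decreasing in `p`, and it is
below the tangent slope `r` at `1` by Bernoulli's inequality. As `p` increases with `x`, both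
claims follow. -/

open Real Set

lemma rpow_sub_one_div_sub_one_lt {r p : ℝ} (hr₀ : 0 < r) (hr₁ : r < 1) (hp : 1 < p) :
    (p ^ r - 1) / (p - 1) < r := by
  have bernoulli := rpow_one_add_lt_one_add_mul_self (s := p - 1) (by linarith)
    (sub_ne_zero.2 hp.ne') hr₀ hr₁
  rw [add_sub_cancel] at bernoulli
  rw [div_lt_iff₀ (sub_pos.2 hp)]
  linarith

lemma strictAntiOn_rpow_sub_one_div_sub_one {r : ℝ} (hr₀ : 0 < r) (hr₁ : r < 1) :
    StrictAntiOn (fun p : ℝ => (p ^ r - 1) / (p - 1)) (Ioi 1) := by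
  intro p hp q hq hpq
  have hp₀ : p ∈ Ici (0 : ℝ) := mem_Ici.2 (zero_le_one.trans hp.le)
  have hq₀ : q ∈ Ici (0 : ℝ) := mem_Ici.2 (zero_le_one.trans hq.le)
  simpa only [one_rpow] using (strictConcaveOn_rpow hr₀ hr₁).secant_strict_mono
    (mem_Ici.2 zero_le_one) hp₀ hq₀ (ne_of_gt hp) (ne_of_gt hq) hpq

lemma exp_mul_eq_exp_mul_rpow_div {a b : ℝ} (hb : b ≠ 0) (x : ℝ) :
    exp (a * x) = exp (b * x) ^ (a / b) := by
  rw [← exp_mul]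
  congr 1
  field_simp

/-- For `0 < β < λ`, the relative error in the reversed hazard rate of the
Marshall–Olkin multivariate exponential series system,
`E x = (λ/β) * ((e^{βx} - 1)/(e^{λx} - 1)) - 1`, is negative for every `x > 0`
and is (strictly) decreasing on `(0,∞)`. -/
theorem stmt_3 (β lam : ℝ) (hβ : 0 < β) (hlt : β < lam)
    (E : ℝ → ℝ)
    (hE : ∀ x, E x = (lam / β) * ((Real.exp (β * x) - 1) / (Real.exp (lam * x) - 1)) - 1) :
    (∀ x > (0 : ℝ), E x < 0) ∧ StrictAntiOn E (Set.Ioi (0 : ℝ)) := by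
  have hlam : 0 < lam := hβ.trans hlt
  have hr₀ : 0 < β / lam := div_pos hβ hlam
  have hr₁ : β / lam < 1 := (div_lt_one hlam).2 hlt
  have hc : 0 < lam / β := div_pos hlam hβ
  have hcr : lam / β * (β / lam) = 1 := by field_simp
  have hE' : ∀ x, E x =
      lam / β * ((exp (lam * x) ^ (β / lam) - 1) / (exp (lam * x) - 1)) - 1 := fun x => by
    rw [hE, exp_mul_eq_exp_mul_rpow_div hlam.ne']
  have hexp : ∀ x > (0 : ℝ), 1 < exp (lam * x) := fun x hx =>
    one_lt_exp_iff.2 (mul_pos hlam hx)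
  refine ⟨fun x hx => ?_, fun x hx y hy hxy => ?_⟩
  · have := mul_lt_mul_of_pos_left (rpow_sub_one_div_sub_one_lt hr₀ hr₁ (hexp x hx)) hc
    rw [hE']
    linarith
  · have := strictAntiOn_rpow_sub_one_div_sub_one hr₀ hr₁ (hexp x hx) (hexp y hy)
      (exp_lt_exp.2 (mul_lt_mul_of_pos_left hxy hlam))
    rw [hE', hE']
    gcongr
end

section
/- Let 0 < β < λ. Then for every x > 0, −1 < (λ/β)·((e^{βx} − 1)/(e^{λx} − 1)) − 1 < 0; that is, the absolute error |E(x)| in the reversed hazard rate of the Marshall–Olkin multivariate exponential series system is bounded between 0 and 1. -/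
/-! By strict convexity of `exp`, the slope `(e^t - 1) / t` of its secant through `0` is strictly
increasing in `t`. The quantity `E(x) + 1` is the ratio of these slopes at `t = βx` and `t = λx`,
so it lies strictly between `0` and `1`. -/

open Real

theorem exp_sub_one_div_lt_exp_sub_one_div {a b : ℝ} (ha : a ≠ 0) (hb : b ≠ 0) (hab : a < b) :
    (exp a - 1) / a < (exp b - 1) / b := by
  simpa using strictConvexOn_exp.secant_strict_mono (a := 0) trivial trivial trivial ha hb hab

theorem exp_sub_one_div_pos {t : ℝ} (ht : t ≠ 0) : 0 < (exp t - 1) / t := by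
  rcases ht.lt_or_gt with hneg | hpos
  · exact div_pos_of_neg_of_neg (by linarith [exp_lt_one_iff.mpr hneg]) hneg
  · exact div_pos (by linarith [add_one_lt_exp ht]) hpos

theorem div_mul_exp_sub_one_div_mem_Ioo {β lam x : ℝ} (hβ : 0 < β) (hlt : β < lam)
    (hx : 0 < x) :
    (lam / β) * ((exp (β * x) - 1) / (exp (lam * x) - 1)) ∈ Set.Ioo 0 1 := by
  have hβx : 0 < β * x := mul_pos hβ hx
  have hlx : 0 < lam * x := mul_pos (hβ.trans hlt) hx
  have hslope :=
    exp_sub_one_div_lt_exp_sub_one_div hβx.ne' hlx.ne' (mul_lt_mul_of_pos_right hlt hx)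
  have hratio : (lam / β) * ((exp (β * x) - 1) / (exp (lam * x) - 1)) =
      ((exp (β * x) - 1) / (β * x)) / ((exp (lam * x) - 1) / (lam * x)) := by
    have : exp (lam * x) - 1 ≠ 0 := (sub_pos.mpr (one_lt_exp_iff.mpr hlx)).ne'
    field_simp
  rw [hratio]
  exact ⟨div_pos (exp_sub_one_div_pos hβx.ne') (exp_sub_one_div_pos hlx.ne'),
    (div_lt_one (exp_sub_one_div_pos hlx.ne')).mpr hslope⟩

/-- For `0 < β < λ` and every `x > 0`,
`-1 < (λ/β) * ((e^{βx} - 1)/(e^{λx} - 1)) - 1 < 0`: the absolute error in the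
reversed hazard rate of the Marshall–Olkin multivariate exponential series system
lies strictly between 0 and 1. -/
theorem stmt_4 (β lam : ℝ) (hβ : 0 < β) (hlt : β < lam) :
    ∀ x > (0 : ℝ),
      -1 < (lam / β) * ((Real.exp (β * x) - 1) / (Real.exp (lam * x) - 1)) - 1 ∧
        (lam / β) * ((Real.exp (β * x) - 1) / (Real.exp (lam * x) - 1)) - 1 < 0 := by
  intro x hx
  obtain ⟨hpos, hlt_one⟩ := div_mul_exp_sub_one_div_mem_Ioo hβ hlt hx
  constructor <;> linarith
end

section
/- Let β, γ, α > 0 with β ≠ γ, and define h(x) = (γ/β)·((e^{βx^α} − 1)/(e^{γx^α} − 1)) − 1 for x > 0. If β > γ then h is monotone increasing on (0, ∞), and if β < γ then h is monotone decreasing on (0, ∞). -/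
/-!
Put `u = e^{γ x^α}` and `c = β / γ`. Then `e^{β x^α} = u ^ c`, so
`h x = (γ / β) · (u ^ c - 1) / (u - 1) - 1`, and `(u ^ c - 1) / (u - 1)` is the slope of the secant
of `u ↦ u ^ c` through `1` and `u`. That power is strictly convex for `c > 1` and strictly concave
for `0 < c < 1`, so the slope is strictly increasing, resp. decreasing, in `u > 1`; and `u` is a
strictly increasing function of `x > 0`.
-/

open Real Set

lemma strictMonoOn_rpow_sub_one_div_sub_one {c : ℝ} (hc : 1 < c) :
    StrictMonoOn (fun u : ℝ => (u ^ c - 1) / (u - 1)) (Ioi 1) := by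
  intro x hx y hy hxy
  have hx' : 1 < x := hx
  have hy' : 1 < y := hy
  simpa using (strictConvexOn_rpow hc).secant_strict_mono (a := 1) (by simp)
    (mem_Ici.2 (by linarith)) (mem_Ici.2 (by linarith)) hx'.ne' hy'.ne' hxy

lemma strictAntiOn_rpow_sub_one_div_sub_one_s6 {c : ℝ} (hc₀ : 0 < c) (hc₁ : c < 1) :
    StrictAntiOn (fun u : ℝ => (u ^ c - 1) / (u - 1)) (Ioi 1) := by
  intro x hx y hy hxy
  have hx' : 1 < x := hx
  have hy' : 1 < y := hy
  simpa using (strictConcaveOn_rpow hc₀ hc₁).secant_strict_mono (a := 1) (by simp)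
    (mem_Ici.2 (by linarith)) (mem_Ici.2 (by linarith)) hx'.ne' hy'.ne' hxy

lemma exp_mul_rpow_div {γ : ℝ} (hγ : γ ≠ 0) (β t : ℝ) :
    exp (γ * t) ^ (β / γ) = exp (β * t) := by
  rw [← exp_mul]
  congr 1
  field_simp

lemma strictMonoOn_exp_mul_rpow {γ α : ℝ} (hγ : 0 < γ) (hα : 0 < α) :
    StrictMonoOn (fun x : ℝ => exp (γ * x ^ α)) (Ioi 0) := fun _ hx _ _ hxy =>
  exp_lt_exp.2 <| mul_lt_mul_of_pos_left (rpow_lt_rpow (le_of_lt hx) hxy hα) hγ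

lemma mapsTo_exp_mul_rpow {γ α : ℝ} (hγ : 0 < γ) :
    MapsTo (fun x : ℝ => exp (γ * x ^ α)) (Ioi 0) (Ioi 1) := fun _ hx =>
  one_lt_exp_iff.2 <| mul_pos hγ (rpow_pos_of_pos hx α)

theorem stmt_6_general (β γ α : ℝ) (hβ : 0 < β) (hγ : 0 < γ) (hα : 0 < α)
    (h : ℝ → ℝ)
    (hh : ∀ x, h x = (γ / β) * ((Real.exp (β * x ^ α) - 1) / (Real.exp (γ * x ^ α) - 1)) - 1) :
    (β > γ → StrictMonoOn h (Set.Ioi (0 : ℝ))) ∧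
      (β < γ → StrictAntiOn h (Set.Ioi (0 : ℝ))) := by
  set u : ℝ → ℝ := fun x => exp (γ * x ^ α)
  set slope : ℝ → ℝ := fun v => (v ^ (β / γ) - 1) / (v - 1)
  have hh' : ∀ x, h x = (γ / β) * slope (u x) - 1 := fun x => by
    rw [hh x, ← exp_mul_rpow_div hγ.ne' β]
  have hu := strictMonoOn_exp_mul_rpow hγ hα
  have hmaps : MapsTo u (Ioi 0) (Ioi 1) := mapsTo_exp_mul_rpow hγ
  refine ⟨fun hβγ x hx y hy hxy => ?_, fun hβγ x hx y hy hxy => ?_⟩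
  · have hslope := (strictMonoOn_rpow_sub_one_div_sub_one ((one_lt_div hγ).2 hβγ)).comp
      hu hmaps hx hy hxy
    rw [hh' x, hh' y]
    gcongr
    exact hslope
  · have hslope := (strictAntiOn_rpow_sub_one_div_sub_one_s6 (div_pos hβ hγ)
      ((div_lt_one hγ).2 hβγ)).comp_strictMonoOn hu hmaps hx hy hxy
    rw [hh' x, hh' y]
    gcongr
    exact hslope

/-- For `β, γ, α > 0` with `β ≠ γ`, the function
`h x = (γ/β) * ((e^{βx^α} - 1)/(e^{γx^α} - 1)) - 1` is (strictly) increasing on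
`(0,∞)` when `β > γ`, and (strictly) decreasing on `(0,∞)` when `β < γ`. -/
theorem stmt_6 (β γ α : ℝ) (hβ : 0 < β) (hγ : 0 < γ) (hα : 0 < α) (hne : β ≠ γ)
    (h : ℝ → ℝ)
    (hh : ∀ x, h x = (γ / β) * ((Real.exp (β * x ^ α) - 1) / (Real.exp (γ * x ^ α) - 1)) - 1) :
    (β > γ → StrictMonoOn h (Set.Ioi (0 : ℝ))) ∧
      (β < γ → StrictAntiOn h (Set.Ioi (0 : ℝ))) :=
  stmt_6_general β γ α hβ hγ hα h hh
end

section
/- Let k ≥ 1 and a₁, …, a_k ≥ 0 with at least one aᵢ > 0. The relative error in the aging intensity function of the Multivariate Gumbel Type 1 series system, E^L(x) = (Σ_{i=1}^k i·aᵢ·xⁱ)/(Σ_{i=1}^k aᵢ·xⁱ) − 1, satisfies 0 ≤ E^L(x) ≤ k − 1 for every x > 0. -/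
/-! The aging intensity `L_D(x)` is the mean of the orders `i ∈ [1, k]` weighted by
`aᵢ xⁱ ≥ 0`, so it lies in `[1, k]`. -/

open Finset

theorem Finset.sum_mul_div_sum_mem_Icc {ι 𝕜 : Type*} [Field 𝕜] [LinearOrder 𝕜]
    [IsStrictOrderedRing 𝕜] {s : Finset ι} {w z : ι → 𝕜} {lo hi : 𝕜}
    (hw₀ : ∀ i ∈ s, 0 ≤ w i) (hw : 0 < ∑ i ∈ s, w i) (hz : ∀ i ∈ s, z i ∈ Set.Icc lo hi) :
    (∑ i ∈ s, z i * w i) / ∑ i ∈ s, w i ∈ Set.Icc lo hi := by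
  convert (convex_Icc lo hi).centerMass_mem hw₀ hw hz using 1
  simp only [centerMass, smul_eq_mul, div_eq_inv_mul, mul_comm]

theorem agingIntensity_mem_Icc {k : ℕ} {a : ℕ → ℝ} (ha : ∀ i ∈ Finset.Icc 1 k, 0 ≤ a i)
    (ha' : ∃ i ∈ Finset.Icc 1 k, 0 < a i) {x : ℝ} (hx : 0 < x) :
    (∑ i ∈ Finset.Icc 1 k, (i : ℝ) * a i * x ^ i) / (∑ i ∈ Finset.Icc 1 k, a i * x ^ i)
      ∈ Set.Icc 1 (k : ℝ) := by
  obtain ⟨j, hj, hja⟩ := ha'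
  have hw₀ : ∀ i ∈ Finset.Icc 1 k, 0 ≤ a i * x ^ i := fun i hi => by
    have := ha i hi
    positivity
  have hw : 0 < ∑ i ∈ Finset.Icc 1 k, a i * x ^ i :=
    sum_pos' hw₀ ⟨j, hj, by positivity⟩
  simp_rw [mul_assoc]
  refine sum_mul_div_sum_mem_Icc hw₀ hw fun i hi => ?_
  obtain ⟨h1, hk⟩ := Finset.mem_Icc.mp hi
  exact ⟨by exact_mod_cast h1, by exact_mod_cast hk⟩

theorem stmt_11_general (k : ℕ) (a : ℕ → ℝ)
    (ha : ∀ i ∈ Finset.Icc 1 k, 0 ≤ a i) (ha' : ∃ i ∈ Finset.Icc 1 k, 0 < a i)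
    (E : ℝ → ℝ)
    (hE : ∀ x, E x = (∑ i ∈ Finset.Icc 1 k, (i : ℝ) * a i * x ^ i) /
        (∑ i ∈ Finset.Icc 1 k, a i * x ^ i) - 1) :
    ∀ x > (0 : ℝ), 0 ≤ E x ∧ E x ≤ (k : ℝ) - 1 := by
  intro x hx
  obtain ⟨hlo, hhi⟩ := agingIntensity_mem_Icc ha ha' hx
  rw [hE]
  constructor <;> linarith

/-- For `k ≥ 1` and coefficients `a 1, …, a k ≥ 0`, not all zero, the relative error in
the aging intensity of the Multivariate Gumbel Type 1 series system,
`E x = (∑ i in [1,k], i * a i * x ^ i) / (∑ i in [1,k], a i * x ^ i) - 1`,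
satisfies `0 ≤ E x ≤ k - 1` for every `x > 0`. -/
theorem stmt_11 (k : ℕ) (hk : 1 ≤ k) (a : ℕ → ℝ)
    (ha : ∀ i ∈ Finset.Icc 1 k, 0 ≤ a i) (ha' : ∃ i ∈ Finset.Icc 1 k, 0 < a i)
    (E : ℝ → ℝ)
    (hE : ∀ x, E x = (∑ i ∈ Finset.Icc 1 k, (i : ℝ) * a i * x ^ i) /
        (∑ i ∈ Finset.Icc 1 k, a i * x ^ i) - 1) :
    ∀ x > (0 : ℝ), 0 ≤ E x ∧ E x ≤ (k : ℝ) - 1 :=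
  stmt_11_general k a ha ha' E hE
end

section
/- Let α > 0 and 0 < b < λ_L. The relative error in the reversed hazard rate of the multivariate Lee (1979) series system, E^μ(x) = (λ_L/b)·((e^{b x^α} − 1)/(e^{λ_L x^α} − 1)) − 1, is negative for every x > 0 and monotone decreasing in x on (0, ∞). -/
/-!
Put `t = x ^ α`, which increases strictly with `x`, so that
`E x = (λ_L / b) * R (x ^ α) - 1` with `R t = (e^{b t} - 1) / (e^{λ_L t} - 1)`.
Both claims reduce to the monotonicity of the secant slope `(e^s - 1) / s` of the convex
function `exp` at `0`: comparing the slopes at `b t < λ_L t` gives `E < 0`, and comparing them at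
`-λ_L t < -b t` gives the sign of the numerator of `R'`.
-/

open Real Set

lemma exp_sub_one_div_lt_exp_sub_one_div_s14 {x y : ℝ} (hx : x ≠ 0) (hy : y ≠ 0) (hxy : x < y) :
    (exp x - 1) / x < (exp y - 1) / y := by
  simpa [exp_zero] using
    strictConvexOn_exp.secant_strict_mono (mem_univ 0) (mem_univ x) (mem_univ y) hx hy hxy

lemma mul_exp_mul_sub_one_lt_mul_exp_mul_sub_one {b l t : ℝ} (hb : 0 < b) (hbl : b < l)
    (ht : 0 < t) :
    l * (exp (b * t) - 1) < b * (exp (l * t) - 1) := by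
  have hl : 0 < l := hb.trans hbl
  have h := exp_sub_one_div_lt_exp_sub_one_div_s14 (mul_pos hb ht).ne' (mul_pos hl ht).ne'
    (mul_lt_mul_of_pos_right hbl ht)
  rw [div_lt_div_iff₀ (by positivity) (by positivity)] at h
  nlinarith

lemma mul_exp_mul_mul_exp_mul_sub_one_lt {b l t : ℝ} (hb : 0 < b) (hbl : b < l) (ht : 0 < t) :
    b * exp (b * t) * (exp (l * t) - 1) < l * exp (l * t) * (exp (b * t) - 1) := by
  have hl : 0 < l := hb.trans hbl
  have h := exp_sub_one_div_lt_exp_sub_one_div_s14 (neg_ne_zero.2 (mul_pos hl ht).ne')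
    (neg_ne_zero.2 (mul_pos hb ht).ne') (neg_lt_neg (mul_lt_mul_of_pos_right hbl ht))
  rw [div_neg, div_neg, neg_lt_neg_iff, div_lt_div_iff₀ (by positivity) (by positivity)] at h
  have hbt : exp (-(b * t)) * exp (b * t) = 1 := by rw [← exp_add, neg_add_cancel, exp_zero]
  have hlt : exp (-(l * t)) * exp (l * t) = 1 := by rw [← exp_add, neg_add_cancel, exp_zero]
  have hsign :
      t * (b * exp (b * t) * (exp (l * t) - 1) - l * exp (l * t) * (exp (b * t) - 1)) < 0 := by
    linear_combination (exp (b * t) * exp (l * t)) * h - (l * t * exp (l * t)) * hbt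
      + (b * t * exp (b * t)) * hlt
  exact sub_neg.1 (neg_of_mul_neg_right hsign ht.le)

lemma strictAntiOn_exp_mul_sub_one_div {b l : ℝ} (hb : 0 < b) (hbl : b < l) :
    StrictAntiOn (fun t => (exp (b * t) - 1) / (exp (l * t) - 1)) (Ioi 0) := by
  have hden : ∀ t ∈ Ioi (0 : ℝ), 0 < exp (l * t) - 1 := fun t ht =>
    sub_pos.2 (one_lt_exp_iff.2 (mul_pos (hb.trans hbl) ht))
  have hderiv : ∀ t ∈ Ioi (0 : ℝ), HasDerivAt (fun t => (exp (b * t) - 1) / (exp (l * t) - 1))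
      ((b * exp (b * t) * (exp (l * t) - 1) - l * exp (l * t) * (exp (b * t) - 1))
        / (exp (l * t) - 1) ^ 2) t := by
    intro t ht
    have hexp : ∀ c : ℝ, HasDerivAt (fun t => exp (c * t) - 1) (c * exp (c * t)) t := fun c => by
      simpa [mul_comm] using (((hasDerivAt_id t).const_mul c).exp).sub_const 1
    exact ((hexp b).div (hexp l) (hden t ht).ne').congr_deriv (by ring)
  refine strictAntiOn_of_deriv_neg (convex_Ioi 0)
    (fun t ht => (hderiv t ht).continuousAt.continuousWithinAt) fun t ht => ?_
  rw [interior_Ioi] at ht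
  rw [(hderiv t ht).deriv]
  exact div_neg_of_neg_of_pos (sub_neg.2 (mul_exp_mul_mul_exp_mul_sub_one_lt hb hbl ht))
    (pow_pos (hden t ht) 2)

/-- For `α > 0` and `0 < b < λ_L`, the relative error in the reversed hazard rate of the
multivariate Lee (1979) series system,
`E x = (λ_L/b) * ((e^{b x^α} - 1)/(e^{λ_L x^α} - 1)) - 1`, is negative for every `x > 0`
and (strictly) decreasing on `(0,∞)`. -/
theorem stmt_14 (α b lamL : ℝ) (hα : 0 < α) (hb : 0 < b) (hlt : b < lamL)
    (E : ℝ → ℝ)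
    (hE : ∀ x, E x =
        (lamL / b) * ((Real.exp (b * x ^ α) - 1) / (Real.exp (lamL * x ^ α) - 1)) - 1) :
    (∀ x > (0 : ℝ), E x < 0) ∧ StrictAntiOn E (Set.Ioi (0 : ℝ)) := by
  have hE' : E = (fun y => lamL / b * y - 1) ∘
      (fun t => (exp (b * t) - 1) / (exp (lamL * t) - 1)) ∘ (fun x => x ^ α) := funext hE
  have hpow : StrictMonoOn (fun x : ℝ => x ^ α) (Ioi 0) :=
    (strictMonoOn_rpow_Ici_of_exponent_pos hα).mono Ioi_subset_Ici_self
  have hmaps : MapsTo (fun x : ℝ => x ^ α) (Ioi 0) (Ioi 0) := fun x hx => rpow_pos_of_pos hx α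
  have hden : ∀ x > (0 : ℝ), 0 < b * (exp (lamL * x ^ α) - 1) := fun x hx =>
    mul_pos hb (sub_pos.2 (one_lt_exp_iff.2 (mul_pos (hb.trans hlt) (hmaps hx))))
  refine ⟨fun x hx => ?_, ?_⟩
  · rw [hE, sub_neg, div_mul_div_comm, div_lt_one (hden x hx)]
    exact mul_exp_mul_sub_one_lt_mul_exp_mul_sub_one hb hlt (hmaps hx)
  · rw [hE']
    refine StrictMonoOn.comp_strictAntiOn ?_
      ((strictAntiOn_exp_mul_sub_one_div hb hlt).comp_strictMonoOn hpow hmaps) (mapsTo_univ _ _)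
    have hslope : 0 < lamL / b := div_pos (hb.trans hlt) hb
    exact fun y _ z _ hyz => by simp only; gcongr
end
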